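/- arXiv:2310.13681 — 2 statements merged into one kernel-verified Lean document; each statement's English description precedes it below -/
import Mathlib

section
/- Let φ : ℝ → ℝ be twice differentiable with nondecreasing second derivative, ā ∈ ℝ a point with φ'(ā) > 0 and φ''(ā) > 0, and let c > 0, r ≥ 0, ε > 0 and m_o ≥ 0 be constants with c − r + ε > 0. Define, for m ≥ m_o, the accuracy-shaping function γ(m) := ( −φ'(ā) + √( φ'(ā)² + 2·φ''(ā)·(c − r + ε)·(m − m_o) ) ) / φ''(ā). Then for every m > m_o: φ(ā + γ(m)) − φ(ā) > (c − r)·(m − m_o). -/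
/-!
Write `a = φ'(ā)`, `b = φ''(ā)`, `κ = c - r + ε` and `t = m - m_o`. Since `φ''` is nondecreasing,
`φ'' ≥ b` to the right of `ā`, so integrating twice gives the second-order lower bound
`φ(ā + h) - φ(ā) ≥ a h + b h² / 2` for `h ≥ 0`. The shaping value `γ(m)` is exactly the positive
root of `a γ + b γ² / 2 = κ t`, hence `φ(ā + γ(m)) - φ(ā) ≥ κ t > (c - r) t`.
-/

open Set

theorem sub_le_sub_of_deriv_le_on_Ioi {f g : ℝ → ℝ} (hf : Differentiable ℝ f)
    (hg : Differentiable ℝ g) {x₀ : ℝ} (hfg : ∀ x, x₀ < x → deriv g x ≤ deriv f x)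
    {y : ℝ} (hy : x₀ ≤ y) : g y - g x₀ ≤ f y - f x₀ := by
  have hmono : MonotoneOn (f - g) (Ici x₀) := by
    refine monotoneOn_of_deriv_nonneg (convex_Ici x₀) (hf.sub hg).continuous.continuousOn
      (hf.sub hg).differentiableOn fun x hx => ?_
    rw [interior_Ici] at hx
    rw [deriv_sub (hf x) (hg x), sub_nonneg]
    exact hfg x hx
  have := hmono self_mem_Ici hy hy
  simp only [Pi.sub_apply] at this
  linarith

theorem add_deriv_mul_add_half_mul_sq_le {φ : ℝ → ℝ} (hφ₁ : Differentiable ℝ φ)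
    (hφ₂ : Differentiable ℝ (deriv φ)) {x₀ b : ℝ}
    (hb : ∀ x, x₀ < x → b ≤ deriv (deriv φ) x) {h : ℝ} (hh : 0 ≤ h) :
    φ x₀ + deriv φ x₀ * h + b / 2 * h ^ 2 ≤ φ (x₀ + h) := by
  have hderiv_ge : ∀ x, x₀ ≤ x → deriv φ x₀ + b * (x - x₀) ≤ deriv φ x := fun x hx => by
    have := sub_le_sub_of_deriv_le_on_Ioi hφ₂ (differentiable_id.const_mul b)
      (fun y hy => by simpa using hb y hy) hx
    simp only [id] at this
    linarith
  set q : ℝ → ℝ := fun x => deriv φ x₀ * x + b / 2 * (x - x₀) ^ 2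
  have hq : ∀ x, HasDerivAt q (deriv φ x₀ + b * (x - x₀)) x := fun x => by
    have := ((hasDerivAt_id x).const_mul (deriv φ x₀)).add
      ((((hasDerivAt_id x).sub_const x₀).pow 2).const_mul (b / 2))
    exact this.congr_deriv (by simp only [id]; ring)
  have := sub_le_sub_of_deriv_le_on_Ioi hφ₁ (fun x => (hq x).differentiableAt)
    (fun x hx => (hq x).deriv ▸ hderiv_ge x hx.le) (le_add_of_nonneg_right hh)
  simp only [q, add_sub_cancel_left, sub_self] at this
  linarith

theorem mul_add_half_mul_sq_of_eq_quadratic_root {a b y : ℝ} (hb : b ≠ 0)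
    (hy : 0 ≤ a ^ 2 + 2 * b * y) :
    a * ((-a + √(a ^ 2 + 2 * b * y)) / b) + b / 2 * ((-a + √(a ^ 2 + 2 * b * y)) / b) ^ 2 = y := by
  have hs := Real.sq_sqrt hy
  field_simp
  linear_combination hs

theorem quadratic_root_pos {a b y : ℝ} (hb : 0 < b) (hy : 0 < y) :
    0 < (-a + √(a ^ 2 + 2 * b * y)) / b := by
  refine div_pos (lt_neg_add_iff_lt.mpr ?_) hb
  calc a ≤ |a| := le_abs_self a
    _ = √(a ^ 2) := (Real.sqrt_sq_eq_abs a).symm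
    _ < √(a ^ 2 + 2 * b * y) := Real.sqrt_lt_sqrt (sq_nonneg a) (by nlinarith)

theorem accuracy_shaping_convex_case_general
    (φ : ℝ → ℝ) (abar c r ε m_o : ℝ)
    (hφ₁ : Differentiable ℝ φ)
    (hφ₂ : Differentiable ℝ (deriv φ))
    (hφ₂mono : Monotone (deriv (deriv φ)))
    (hφ'' : 0 < deriv (deriv φ) abar)
    (hε : 0 < ε)
    (hκ : 0 < c - r + ε) :
    ∀ m > m_o,
      φ (abar +
          (-deriv φ abar +
            Real.sqrt ((deriv φ abar) ^ 2 +
              2 * deriv (deriv φ) abar * (c - r + ε) * (m - m_o))) /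
            deriv (deriv φ) abar) -
        φ abar > (c - r) * (m - m_o) := by
  intro m hm
  have ht : 0 < m - m_o := sub_pos.mpr hm
  have hκt : 0 < (c - r + ε) * (m - m_o) := mul_pos hκ ht
  rw [mul_assoc _ (c - r + ε)]
  have hquad := add_deriv_mul_add_half_mul_sq_le hφ₁ hφ₂ (x₀ := abar)
    (fun _ hx => hφ₂mono hx.le) (quadratic_root_pos (a := deriv φ abar) hφ'' hκt).le
  rw [add_assoc, mul_add_half_mul_sq_of_eq_quadratic_root hφ''.ne' (by positivity)] at hquad
  have hgap : (c - r) * (m - m_o) < (c - r + ε) * (m - m_o) :=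
    mul_lt_mul_of_pos_right (lt_add_of_pos_right _ hε) ht
  linarith

/-- **Accuracy-shaping guarantee, strictly convex case** (Theorem 5.2 of
RealFM, case `φ'' (ā) > 0`).  For a twice differentiable payoff `φ` with
nondecreasing second derivative, `φ'(ā) > 0`, `φ''(ā) > 0`, marginal cost
`c > 0`, marginal reward `r ≥ 0`, `ε > 0`, `m_o ≥ 0` and `c - r + ε > 0`, the
shaping function
`γ(m) = (-φ'(ā) + √(φ'(ā)² + 2 φ''(ā) (c - r + ε) (m - m_o))) / φ''(ā)`
satisfies `φ(ā + γ(m)) - φ(ā) > (c - r) (m - m_o)` for every `m > m_o`. -/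
theorem accuracy_shaping_convex_case
    (φ : ℝ → ℝ) (abar c r ε m_o : ℝ)
    (hφ₁ : Differentiable ℝ φ)
    (hφ₂ : Differentiable ℝ (deriv φ))
    (hφ₂mono : Monotone (deriv (deriv φ)))
    (hφ' : 0 < deriv φ abar)
    (hφ'' : 0 < deriv (deriv φ) abar)
    (hc : 0 < c) (hr : 0 ≤ r) (hε : 0 < ε) (hmo : 0 ≤ m_o)
    (hκ : 0 < c - r + ε) :
    ∀ m > m_o,
      φ (abar +
          (-deriv φ abar +
            Real.sqrt ((deriv φ abar) ^ 2 +
              2 * deriv (deriv φ) abar * (c - r + ε) * (m - m_o))) /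
            deriv (deriv φ) abar) -
        φ abar > (c - r) * (m - m_o) :=
  accuracy_shaping_convex_case_general φ abar c r ε m_o hφ₁ hφ₂ hφ₂mono hφ'' hε hκ
end

section
/- Let φ : ℝ → ℝ be convex and differentiable at a point ā with φ'(ā) > 0, and let c > 0, r ≥ 0, ε > 0 and m_o ≥ 0 be constants with c − r + ε > 0. Define, for m ≥ m_o, γ(m) := (c − r + ε)·(m − m_o) / φ'(ā). Then for every m > m_o: φ(ā + γ(m)) − φ(ā) > (c − r)·(m − m_o). -/
open Set

theorem ConvexOn.deriv_mul_sub_le {S : Set ℝ} {f : ℝ → ℝ} {x y : ℝ} (hf : ConvexOn ℝ S f)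
    (hx : x ∈ S) (hy : y ∈ S) (hfd : DifferentiableAt ℝ f x) :
    deriv f x * (y - x) ≤ f y - f x := by
  rcases lt_trichotomy x y with hxy | rfl | hyx
  · have hslope := hf.deriv_le_slope hx hy hxy hfd
    rwa [slope_def_field, le_div_iff₀ (sub_pos.2 hxy)] at hslope
  · simp
  · have hslope := hf.slope_le_deriv hy hx hyx hfd
    rw [slope_def_field, div_le_iff₀ (sub_pos.2 hyx)] at hslope
    linarith

theorem accuracy_shaping_linear_case_general
    (φ : ℝ → ℝ) (abar c r ε m_o : ℝ)
    (hconv : ConvexOn ℝ Set.univ φ)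
    (hdiff : DifferentiableAt ℝ φ abar)
    (hφ' : 0 < deriv φ abar)
    (hε : 0 < ε) :
    ∀ m > m_o,
      φ (abar + (c - r + ε) * (m - m_o) / deriv φ abar) - φ abar >
        (c - r) * (m - m_o) := by
  intro m hm
  have hsurplus : 0 < ε * (m - m_o) := mul_pos hε (sub_pos.2 hm)
  have htangent := hconv.deriv_mul_sub_le (mem_univ abar)
    (mem_univ (abar + (c - r + ε) * (m - m_o) / deriv φ abar)) hdiff
  rw [add_sub_cancel_left, mul_div_cancel₀ _ hφ'.ne'] at htangent
  linarith

/-- **Accuracy-shaping guarantee, linear case** (Theorem 5.2 of RealFM, case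
`φ''(ā) = 0`).  For a convex payoff `φ` differentiable at `ā` with
`φ'(ā) > 0`, marginal cost `c > 0`, marginal reward `r ≥ 0`, `ε > 0`,
`m_o ≥ 0` and `c - r + ε > 0`, the shaping function
`γ(m) = (c - r + ε) (m - m_o) / φ'(ā)` satisfies
`φ(ā + γ(m)) - φ(ā) > (c - r) (m - m_o)` for every `m > m_o`. -/
theorem accuracy_shaping_linear_case
    (φ : ℝ → ℝ) (abar c r ε m_o : ℝ)
    (hconv : ConvexOn ℝ Set.univ φ)
    (hdiff : DifferentiableAt ℝ φ abar)
    (hφ' : 0 < deriv φ abar)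
    (hc : 0 < c) (hr : 0 ≤ r) (hε : 0 < ε) (hmo : 0 ≤ m_o)
    (hκ : 0 < c - r + ε) :
    ∀ m > m_o,
      φ (abar + (c - r + ε) * (m - m_o) / deriv φ abar) - φ abar >
        (c - r) * (m - m_o) :=
  accuracy_shaping_linear_case_general φ abar c r ε m_o hconv hdiff hφ' hε
end
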